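/- Let σ ≥ (p-1)·p^{(s+1)/(qr-(p-1)(s+1)) - 1} where 0 < (p-1)/r < q/(s+1) and p > 1. Then the unique positive root u* of u = u^{p - qr/(s+1)} + σ satisfies p·(u*)^{p-1-qr/(s+1)} ≤ 1. -/

import Mathlib

theorem stmt_17 (p q r s σ : ℝ) (hp0 : 0 ≤ p) (hq0 : 0 ≤ q) (hr0 : 0 ≤ r) (hs0 : 0 ≤ s)
    (hp : 1 < p) (hlow : 0 < (p - 1) / r) (hcond : (p - 1) / r < q / (s + 1))
    (hσ : (p - 1) * p ^ ((s + 1) / (q * r - (p - 1) * (s + 1)) - 1) ≤ σ)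
    (ustar : ℝ) (hustar : 0 < ustar)
    (heq : ustar = ustar ^ (p - q * r / (s + 1)) + σ) :
    p * ustar ^ (p - 1 - q * r / (s + 1)) ≤ 1 := by
  have hs1 : (0:ℝ) < s + 1 := by linarith
  have hp1 : (0:ℝ) < p - 1 := by linarith
  have hr : 0 < r := by
    by_contra h
    push_neg at h
    have : r = 0 := le_antisymm h hr0
    rw [this, div_zero] at hlow
    exact lt_irrefl 0 hlow
  have hD : 0 < q * r - (p - 1) * (s + 1) := by
    rw [div_lt_div_iff₀ hr hs1] at hcond
    nlinarith
  set A := q * r / (s + 1) with hA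
  set α := p - A with hα
  set β := (s + 1) / (q * r - (p - 1) * (s + 1)) with hβ
  have hβpos : 0 < β := div_pos hs1 hD
  have h1α : 1 - α = (q * r - (p - 1) * (s + 1)) / (s + 1) := by
    rw [hα, hA]; field_simp <;> ring
  have h1αpos : 0 < 1 - α := by rw [h1α]; exact div_pos hD hs1
  have hβ1α : β * (1 - α) = 1 := by
    rw [hβ, h1α]; field_simp
    exact div_self (ne_of_gt (by linarith [hD, mul_comm (s+1) (p-1)]))
  have hσpos : 0 < σ := lt_of_lt_of_le (by positivity) hσ
  -- u > 1
  have hu1 : 1 < ustar := by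
    by_contra h
    push_neg at h
    have : ustar ^ (1:ℝ) ≤ ustar ^ α :=
      Real.rpow_le_rpow_of_exponent_ge hustar h (by linarith)
    rw [Real.rpow_one] at this
    linarith [heq ▸ this]
  have hppos : (0:ℝ) < p := by linarith
  have hbpos : (0:ℝ) < p ^ β := Real.rpow_pos_of_pos hppos β
  have hb1 : 1 < p ^ β := Real.one_lt_rpow_iff_of_pos hppos |>.mpr (Or.inl ⟨hp, hβpos⟩)
  -- key: p ^ β ≤ ustar
  have hkey : p ^ β ≤ ustar := by
    by_contra h
    push_neg at h
    -- f(a) = a - a^α strictly increasing on (1,∞): f(ustar) < f(p^β)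
    have hmono : ustar - ustar ^ α < p ^ β - (p ^ β) ^ α := by
      rcases le_or_gt α 0 with hα0 | hα0
      · have h1 : (p ^ β) ^ α ≤ ustar ^ α :=
          Real.rpow_le_rpow_of_nonpos hustar h.le hα0
        linarith
      · have hexp : α + (1 - α) = 1 := by ring
        have e1 : ustar - ustar ^ α = ustar ^ α * (ustar ^ (1 - α) - 1) := by
          rw [mul_sub, mul_one, ← Real.rpow_add hustar, hexp, Real.rpow_one]
        have e2 : p ^ β - (p ^ β) ^ α = (p ^ β) ^ α * ((p ^ β) ^ (1 - α) - 1) := by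
          rw [mul_sub, mul_one, ← Real.rpow_add hbpos, hexp, Real.rpow_one]
        rw [e1, e2]
        have h1 : ustar ^ α ≤ (p ^ β) ^ α :=
          Real.rpow_le_rpow hustar.le h.le hα0.le
        have h2 : ustar ^ (1 - α) < (p ^ β) ^ (1 - α) :=
          Real.rpow_lt_rpow hustar.le h h1αpos
        have h3 : (1:ℝ) ≤ ustar ^ (1 - α) :=
          Real.one_le_rpow hu1.le h1αpos.le
        have h4 : 0 < (p ^ β) ^ α := Real.rpow_pos_of_pos hbpos α
        exact mul_lt_mul' h1 (by linarith) (by linarith) h4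
    have e3 : (p ^ β) ^ α = p ^ (β - 1) := by
      rw [← Real.rpow_mul hppos.le]
      congr 1
      nlinarith [hβ1α]
    have e5 : p ^ β - p ^ (β - 1) = (p - 1) * p ^ (β - 1) := by
      have : p ^ β = p ^ (β - 1) * p := by
        rw [← Real.rpow_add_one (ne_of_gt hppos)]
        ring_nf
      rw [this]; ring
    rw [e3, e5] at hmono
    have hσeq : σ = ustar - ustar ^ α := by linarith [heq]
    linarith [hσ]
  -- conclude
  have h5 : p ≤ ustar ^ (1 - α) := by
    calc p = (p ^ β) ^ (1 - α) := by
          rw [← Real.rpow_mul hppos.le, hβ1α, Real.rpow_one]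
      _ ≤ ustar ^ (1 - α) := Real.rpow_le_rpow hbpos.le hkey h1αpos.le
  have e4 : ustar ^ (p - 1 - q * r / (s + 1)) = (ustar ^ (1 - α))⁻¹ := by
    rw [← Real.rpow_neg hustar.le]
    congr 1
    rw [hα, hA]; ring
  rw [e4]
  rw [mul_inv_le_iff₀ (by positivity)]
  simpa using h5
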